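/- The vector field F₉(x,y,z) = (0, −xy, xz) on ℝ³ is complete: the integral curve with initial condition (x₀,y₀,z₀) is t ↦ (x₀, y₀e^{−x₀t}, z₀e^{x₀t}), defined for all t ∈ ℝ, and it is unbounded whenever x₀ ≠ 0 and (y₀ ≠ 0 or z₀ ≠ 0). -/

import Mathlib

/-- The geodesic field `F₉` of `Q₉` on `h(−1)`: `(0, −xy, xz)`. -/
def F9sol (v : Fin 3 → ℝ) : Fin 3 → ℝ := ![0, -(v 0 * v 1), v 0 * v 2]

open Real

theorem hasDerivAt_const_mul_exp_mul (a b t : ℝ) :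
    HasDerivAt (fun t => b * exp (a * t)) (a * (b * exp (a * t))) t := by
  refine ((((hasDerivAt_id t).const_mul a).exp).const_mul b).congr_deriv ?_
  simp only [id, mul_one]
  ring

theorem not_exists_abs_const_mul_exp_mul_le {a b : ℝ} (ha : a ≠ 0) (hb : b ≠ 0) :
    ¬ ∃ C, ∀ t, |b * exp (a * t)| ≤ C := by
  rintro ⟨C, hC⟩
  have hb' : 0 < |b| := abs_pos.mpr hb
  have hC₀ : 0 ≤ C := (abs_nonneg _).trans (hC 0)
  have hC₁ : 0 < (C + 1) / |b| := div_pos (by linarith) hb'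
  -- at `t = log ((C + 1) / |b|) / a` the function has absolute value exactly `C + 1`
  have := hC (log ((C + 1) / |b|) / a)
  rw [mul_div_cancel₀ _ ha, abs_mul, abs_exp, exp_log hC₁, mul_div_cancel₀ _ hb'.ne'] at this
  linarith

/-- `F₉` is complete: the integral curve through `(x₀,y₀,z₀)` is
`t ↦ (x₀, y₀e^{−x₀t}, z₀e^{x₀t})`, defined for all `t`, and it is unbounded whenever
`x₀ ≠ 0` and (`y₀ ≠ 0` or `z₀ ≠ 0`). -/
theorem stmt_16 (x₀ y₀ z₀ : ℝ) :
    (fun t : ℝ => (![x₀, y₀ * Real.exp (-x₀ * t), z₀ * Real.exp (x₀ * t)] : Fin 3 → ℝ)) 0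
      = ![x₀, y₀, z₀] ∧
    (∀ t : ℝ, HasDerivAt
      (fun t : ℝ => (![x₀, y₀ * Real.exp (-x₀ * t), z₀ * Real.exp (x₀ * t)] : Fin 3 → ℝ))
      (F9sol ![x₀, y₀ * Real.exp (-x₀ * t), z₀ * Real.exp (x₀ * t)]) t) ∧
    (x₀ ≠ 0 → (y₀ ≠ 0 ∨ z₀ ≠ 0) →
      ¬ ∃ C, ∀ t : ℝ,
        ‖(![x₀, y₀ * Real.exp (-x₀ * t), z₀ * Real.exp (x₀ * t)] : Fin 3 → ℝ)‖ ≤ C) := by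
  refine ⟨by ext i; fin_cases i <;> simp, fun t => ?_, ?_⟩
  · rw [hasDerivAt_pi]
    intro i
    fin_cases i
    · simpa [F9sol] using hasDerivAt_const t x₀
    · simpa [F9sol, neg_mul] using hasDerivAt_const_mul_exp_mul (-x₀) y₀ t
    · simpa [F9sol] using hasDerivAt_const_mul_exp_mul x₀ z₀ t
  · rintro hx hyz ⟨C, hC⟩
    have hcoord (i : Fin 3) (t : ℝ) := (norm_le_pi_norm _ i).trans (hC t)
    rcases hyz with hy | hz
    · exact not_exists_abs_const_mul_exp_mul_le (neg_ne_zero.mpr hx) hy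
        ⟨C, fun t => by simpa using hcoord 1 t⟩
    · exact not_exists_abs_const_mul_exp_mul_le hx hz ⟨C, fun t => by simpa using hcoord 2 t⟩
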